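/- arXiv:2210.02039 — 4 statements merged into one kernel-verified Lean document; each statement's English description precedes it below -/
import Mathlib

section
/- Define Φ : ℝ × (0,1) → ℝ⁴ by Φ(s,t) = (s, (2t−1)(s²−1), −2s/√(t(1−t)), (2t−1)/√(t(1−t))) and f : ℝ × (0,1) → ℝ by f(s,t) = −4(s²−1)√(t(1−t)). Then Φ is injective and is an exact Lagrangian parametrization with primitive f; explicitly, for all s ∈ ℝ and t ∈ (0,1): (−2s/√(t(1−t)))·1 + ((2t−1)/√(t(1−t)))·(2t−1)·2s = ∂f/∂s(s,t) and ((2t−1)/√(t(1−t)))·2(s²−1) = ∂f/∂t(s,t). -/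
/-!
Injectivity: the first coordinate recovers `s`, and the fourth recovers `t`, because
`(2t-1)² = 1 - 4t(1-t)` makes its square equal to `1/(t(1-t)) - 4`, which determines
`t(1-t)`, hence `√(t(1-t))`, hence `2t-1`.
The primitive is checked by differentiating `f` directly; in the `s`-direction the same identity
turns `2s((2t-1)² - 1)/√(t(1-t))` into `-8s√(t(1-t))`.
-/

open Real Set

lemma mul_one_sub_pos {t : ℝ} (ht : t ∈ Ioo (0 : ℝ) 1) : 0 < t * (1 - t) :=
  mul_pos ht.1 (sub_pos.2 ht.2)

lemma inv_mul_one_sub_eq {t : ℝ} (ht : t * (1 - t) ≠ 0) :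
    (t * (1 - t))⁻¹ = (2 * t - 1) ^ 2 / (t * (1 - t)) + 4 := by
  rw [div_add' _ _ _ ht, inv_eq_one_div]
  congr 1
  ring

lemma injOn_two_mul_sub_one_div_sqrt :
    InjOn (fun t : ℝ => (2 * t - 1) / √(t * (1 - t))) (Ioo 0 1) := by
  intro t ht t' ht' h
  have hp := mul_one_sub_pos ht
  have hp' := mul_one_sub_pos ht'
  have hsq : (2 * t - 1) ^ 2 / (t * (1 - t)) = (2 * t' - 1) ^ 2 / (t' * (1 - t')) := by
    rw [← sq_sqrt hp.le, ← sq_sqrt hp'.le, ← div_pow, ← div_pow]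
    exact congrArg (· ^ 2) h
  have hprod : t * (1 - t) = t' * (1 - t') := by
    rw [← inv_inj, inv_mul_one_sub_eq hp.ne', inv_mul_one_sub_eq hp'.ne', hsq]
  have hnum : 2 * t - 1 = 2 * t' - 1 := by
    simpa only [hprod, div_left_inj' (sqrt_pos.2 hp').ne'] using h
  linarith

lemma hasDerivAt_sqrt_mul_one_sub {t : ℝ} (ht : t * (1 - t) ≠ 0) :
    HasDerivAt (fun t' : ℝ => √(t' * (1 - t'))) ((1 - 2 * t) / (2 * √(t * (1 - t)))) t := by
  have hinner : HasDerivAt (fun t' : ℝ => t' * (1 - t')) (1 - 2 * t) t :=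
    ((hasDerivAt_id' t).mul ((hasDerivAt_const t 1).sub (hasDerivAt_id' t))).congr_deriv
      (by simp only [Pi.sub_apply]; ring)
  exact hinner.sqrt ht

lemma liouville_form_s_eq_deriv_primitive (s : ℝ) {t : ℝ} (ht : t ∈ Ioo (0 : ℝ) 1) :
    (-2 * s / √(t * (1 - t))) * 1 + ((2 * t - 1) / √(t * (1 - t))) * ((2 * t - 1) * (2 * s))
      = deriv (fun s' : ℝ => -4 * (s' ^ 2 - 1) * √(t * (1 - t))) s := by
  have hpos := mul_one_sub_pos ht
  have hd : HasDerivAt (fun s' : ℝ => -4 * (s' ^ 2 - 1) * √(t * (1 - t)))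
      (-4 * (2 * s) * √(t * (1 - t))) s := by
    simpa using (((hasDerivAt_pow 2 s).sub_const 1).const_mul (-4 : ℝ)).mul_const
      √(t * (1 - t))
  rw [hd.deriv]
  field_simp [(sqrt_pos.2 hpos).ne']
  linear_combination (4 * s) * sq_sqrt hpos.le

lemma liouville_form_t_eq_deriv_primitive (s : ℝ) {t : ℝ} (ht : t ∈ Ioo (0 : ℝ) 1) :
    ((2 * t - 1) / √(t * (1 - t))) * (2 * (s ^ 2 - 1))
      = deriv (fun t' : ℝ => -4 * (s ^ 2 - 1) * √(t' * (1 - t'))) t := by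
  have hpos := mul_one_sub_pos ht
  rw [((hasDerivAt_sqrt_mul_one_sub hpos.ne').const_mul (-4 * (s ^ 2 - 1))).deriv]
  field_simp [(sqrt_pos.2 hpos).ne']
  ring

/-- Local model of the Lagrangian filling in the vertex reduction move:
`Φ(s,t) = (s, (2t−1)(s²−1), −2s/√(t(1−t)), (2t−1)/√(t(1−t)))` is injective on
`ℝ × (0,1)` and is an exact Lagrangian parametrization with primitive
`f(s,t) = −4(s²−1)√(t(1−t))`. -/
theorem stmt_1 :
    Set.InjOn (fun p : ℝ × ℝ =>
        (p.1, (2 * p.2 - 1) * (p.1 ^ 2 - 1),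
          -2 * p.1 / Real.sqrt (p.2 * (1 - p.2)),
          (2 * p.2 - 1) / Real.sqrt (p.2 * (1 - p.2))))
      (Set.univ ×ˢ Set.Ioo (0 : ℝ) 1) ∧
    ∀ s t : ℝ, t ∈ Set.Ioo (0 : ℝ) 1 →
      ((-2 * s / Real.sqrt (t * (1 - t))) * 1
          + ((2 * t - 1) / Real.sqrt (t * (1 - t))) * ((2 * t - 1) * (2 * s))
          = deriv (fun s' : ℝ => -4 * (s' ^ 2 - 1) * Real.sqrt (t * (1 - t))) s) ∧
      (((2 * t - 1) / Real.sqrt (t * (1 - t))) * (2 * (s ^ 2 - 1))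
          = deriv (fun t' : ℝ => -4 * (s ^ 2 - 1) * Real.sqrt (t' * (1 - t'))) t) := by
  refine ⟨?_, fun s t ht =>
    ⟨liouville_form_s_eq_deriv_primitive s ht, liouville_form_t_eq_deriv_primitive s ht⟩⟩
  rintro ⟨s, t⟩ ⟨-, ht⟩ ⟨s', t'⟩ ⟨-, ht'⟩ h
  simp only [Prod.mk.injEq] at h
  obtain ⟨rfl, -, -, h4⟩ := h
  exact Prod.ext rfl (injOn_two_mul_sub_one_div_sqrt ht ht' h4)
end

section
/- Define Φ : ℝ² → ℝ⁴ by Φ(r,θ) = (r²sin(3θ/2)cos(θ/2), r²sin(3θ/2)sin(θ/2), −r·sinθ, −r·cosθ) and f : ℝ² → ℝ by f(r,θ) = −(2/3)r³sin²(3θ/2). Then for all (r,θ) ∈ ℝ²: (−r·sinθ)·∂ᵣ(r²sin(3θ/2)cos(θ/2)) + (−r·cosθ)·∂ᵣ(r²sin(3θ/2)sin(θ/2)) = ∂f/∂r(r,θ) and (−r·sinθ)·∂_θ(r²sin(3θ/2)cos(θ/2)) + (−r·cosθ)·∂_θ(r²sin(3θ/2)sin(θ/2)) = ∂f/∂θ(r,θ);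 moreover the restriction of Φ to (0,∞) × [0,2π) is injective. -/
/-!
Both exactness equations reduce, after differentiating, to the angle-addition formulas for
`sin (3θ/2)` and `cos (3θ/2)` written with `θ + θ/2`. Injectivity only needs the fibre
coordinates: `(ξ₂, ξ₁) = -(r cos θ, r sin θ)` are polar coordinates, so `r = |ξ|` and `θ` is
determined modulo `2π`.
-/

open Real Set

theorem sin_three_mul_div_two (θ : ℝ) :
    sin (3 * θ / 2) = sin θ * cos (θ / 2) + cos θ * sin (θ / 2) := by
  rw [← sin_add]; ring_nf

theorem cos_three_mul_div_two (θ : ℝ) :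
    cos (3 * θ / 2) = cos θ * cos (θ / 2) - sin θ * sin (θ / 2) := by
  rw [← cos_add]; ring_nf

theorem hasDerivAt_sin_three_mul_div_two (x : ℝ) :
    HasDerivAt (fun t => sin (3 * t / 2)) (cos (3 * x / 2) * (3 / 2)) x := by
  simpa using (((hasDerivAt_id x).const_mul 3).div_const 2).sin

theorem hasDerivAt_sin_div_two (x : ℝ) :
    HasDerivAt (fun t => sin (t / 2)) (cos (x / 2) * (1 / 2)) x :=
  ((hasDerivAt_id x).div_const 2).sin

theorem hasDerivAt_cos_div_two (x : ℝ) :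
    HasDerivAt (fun t => cos (t / 2)) (-sin (x / 2) * (1 / 2)) x :=
  ((hasDerivAt_id x).div_const 2).cos

theorem liouville_pullback_radial (r θ : ℝ) :
    -(r * sin θ) * deriv (fun r' : ℝ => r' ^ 2 * sin (3 * θ / 2) * cos (θ / 2)) r
        + -(r * cos θ) * deriv (fun r' : ℝ => r' ^ 2 * sin (3 * θ / 2) * sin (θ / 2)) r
      = deriv (fun r' : ℝ => -(2 / 3) * r' ^ 3 * sin (3 * θ / 2) ^ 2) r := by
  simp only [deriv_mul_const_field', deriv_const_mul_field', deriv_pow_field]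
  rw [sin_three_mul_div_two]
  ring

theorem liouville_pullback_angular (r θ : ℝ) :
    -(r * sin θ) * deriv (fun θ' : ℝ => r ^ 2 * sin (3 * θ' / 2) * cos (θ' / 2)) θ
        + -(r * cos θ) * deriv (fun θ' : ℝ => r ^ 2 * sin (3 * θ' / 2) * sin (θ' / 2)) θ
      = deriv (fun θ' : ℝ => -(2 / 3) * r ^ 3 * sin (3 * θ' / 2) ^ 2) θ := by
  have hx₁ := ((hasDerivAt_sin_three_mul_div_two θ).const_mul (r ^ 2)).fun_mul
    (hasDerivAt_cos_div_two θ)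
  have hx₂ := ((hasDerivAt_sin_three_mul_div_two θ).const_mul (r ^ 2)).fun_mul
    (hasDerivAt_sin_div_two θ)
  have hf := ((hasDerivAt_sin_three_mul_div_two θ).fun_pow 2).const_mul (-(2 / 3) * r ^ 3)
  rw [hx₁.deriv, hx₂.deriv, hf.deriv]
  linear_combination (3 / 2 * r ^ 3 * cos (3 * θ / 2)) * sin_three_mul_div_two θ
    + (1 / 2 * r ^ 3 * sin (3 * θ / 2)) * cos_three_mul_div_two θ

theorem injOn_circleMap_zero_Ioi_Ico :
    InjOn (fun p : ℝ × ℝ => circleMap 0 p.1 p.2) (Ioi 0 ×ˢ Ico 0 (2 * π)) := by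
  rintro ⟨r, θ⟩ ⟨hr, hθ⟩ ⟨s, ψ⟩ ⟨hs, hψ⟩ h
  have hrs : r = s := by
    simpa [abs_of_pos (mem_Ioi.mp hr), abs_of_pos (mem_Ioi.mp hs)] using congrArg norm h
  subst hrs
  simp only [Prod.mk.injEq, true_and]
  exact injOn_circleMap_of_abs_sub_le' (mem_Ioi.mp hr).ne' (by simp) hθ hψ h

/-- The intermediate Lagrangian `L_{1/2}`:
`Φ(r,θ) = (r²sin(3θ/2)cos(θ/2), r²sin(3θ/2)sin(θ/2), −r·sinθ, −r·cosθ)` satisfies the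
exact Lagrangian parametrization equations with primitive `f(r,θ) = −(2/3)r³sin²(3θ/2)`,
and its restriction to `(0,∞) × [0,2π)` is injective. -/
theorem stmt_3 :
    (∀ r θ : ℝ,
      ((-(r * Real.sin θ))
            * deriv (fun r' : ℝ => r' ^ 2 * Real.sin (3 * θ / 2) * Real.cos (θ / 2)) r
          + (-(r * Real.cos θ))
            * deriv (fun r' : ℝ => r' ^ 2 * Real.sin (3 * θ / 2) * Real.sin (θ / 2)) r
          = deriv (fun r' : ℝ => -(2 / 3) * r' ^ 3 * Real.sin (3 * θ / 2) ^ 2) r) ∧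
      ((-(r * Real.sin θ))
            * deriv (fun θ' : ℝ => r ^ 2 * Real.sin (3 * θ' / 2) * Real.cos (θ' / 2)) θ
          + (-(r * Real.cos θ))
            * deriv (fun θ' : ℝ => r ^ 2 * Real.sin (3 * θ' / 2) * Real.sin (θ' / 2)) θ
          = deriv (fun θ' : ℝ => -(2 / 3) * r ^ 3 * Real.sin (3 * θ' / 2) ^ 2) θ)) ∧
    Set.InjOn (fun p : ℝ × ℝ =>
        (p.1 ^ 2 * Real.sin (3 * p.2 / 2) * Real.cos (p.2 / 2),
          p.1 ^ 2 * Real.sin (3 * p.2 / 2) * Real.sin (p.2 / 2),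
          -(p.1 * Real.sin p.2), -(p.1 * Real.cos p.2)))
      (Set.Ioi (0 : ℝ) ×ˢ Set.Ico (0 : ℝ) (2 * Real.pi)) := by
  refine ⟨fun r θ => ⟨liouville_pullback_radial r θ, liouville_pullback_angular r θ⟩, ?_⟩
  rintro ⟨r, θ⟩ hrθ ⟨s, ψ⟩ hsψ h
  simp only [Prod.mk.injEq, neg_inj] at h
  refine injOn_circleMap_zero_Ioi_Ico hrθ hsψ (Complex.ext ?_ ?_)
  · simpa [circleMap_zero_re] using h.2.2.2
  · simpa [circleMap_zero_im] using h.2.2.1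
end

section
/- Let r > 0 and u = √(1 + 2/r²), and let θ ∈ ℝ satisfy cosθ = −u/2. Then: r²·sin(3θ/2)·cos(θ/2) + (1/2)·r²(u−1)·sinθ = 0 and r²·sin(3θ/2)·sin(θ/2) + (1/2)·r²(u−1)·cosθ = −1. Moreover, if r² > 2/3 then a real θ with cosθ = −u/2 exists. -/
/-!
By product-to-sum, `sin (3θ/2) cos (θ/2) = sin θ (1 + 2 cos θ) / 2` and
`sin (3θ/2) sin (θ/2) = (1 - cos θ)(1 + 2 cos θ) / 2`. Substituting `cos θ = -u/2` turns the first
expression into `-(u - 1) sin θ / 2`, which cancels the Hamiltonian term, and the second into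
`r² (1 - u²) / 2 = -1`, since `r² (u² - 1) = 2`. A suitable `θ` exists iff `u ≤ 2`, i.e.
`r² ≥ 2/3`.
-/

open Real

lemma sin_three_mul_half_mul_cos_half (θ : ℝ) :
    sin (3 * θ / 2) * cos (θ / 2) = sin θ * (1 + 2 * cos θ) / 2 := by
  have h := sin_add_sin (2 * θ) θ
  rw [show (2 * θ + θ) / 2 = 3 * θ / 2 by ring, show (2 * θ - θ) / 2 = θ / 2 by ring,
    sin_two_mul] at h
  linarith

lemma sin_three_mul_half_mul_sin_half (θ : ℝ) :
    sin (3 * θ / 2) * sin (θ / 2) = (1 - cos θ) * (1 + 2 * cos θ) / 2 := by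
  have h := cos_sub_cos θ (2 * θ)
  rw [show (θ + 2 * θ) / 2 = 3 * θ / 2 by ring, show (θ - 2 * θ) / 2 = -(θ / 2) by ring,
    sin_neg, cos_two_mul] at h
  linarith

lemma sq_mul_sq_sqrt_one_add_two_div_sq_sub_one {r : ℝ} (hr : r ≠ 0) :
    r ^ 2 * (√(1 + 2 / r ^ 2) ^ 2 - 1) = 2 := by
  rw [sq_sqrt (by positivity)]
  field_simp
  ring

lemma sqrt_one_add_two_div_sq_le_two {r : ℝ} (hr : 2 / 3 < r ^ 2) : √(1 + 2 / r ^ 2) ≤ 2 := by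
  rw [sqrt_le_left (by norm_num), ← le_sub_iff_add_le', div_le_iff₀ (by linarith)]
  linarith

/-- For `r > 0`, `u = √(1 + 2/r²)` and any `θ` with `cos θ = −u/2`, the crossing of the
projected level curve of `L₀ = φ_{H₋}^{−1/2}(L_{1/2})` lies at the point `(0, −1)`;
moreover such a `θ` exists whenever `r² > 2/3`. -/
theorem stmt_5 (r : ℝ) (hr : 0 < r) :
    (∀ θ : ℝ, Real.cos θ = -(Real.sqrt (1 + 2 / r ^ 2)) / 2 →
      (r ^ 2 * Real.sin (3 * θ / 2) * Real.cos (θ / 2)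
          + (1 / 2) * (r ^ 2 * (Real.sqrt (1 + 2 / r ^ 2) - 1)) * Real.sin θ = 0 ∧
        r ^ 2 * Real.sin (3 * θ / 2) * Real.sin (θ / 2)
          + (1 / 2) * (r ^ 2 * (Real.sqrt (1 + 2 / r ^ 2) - 1)) * Real.cos θ = -1)) ∧
    (2 / 3 < r ^ 2 → ∃ θ : ℝ, Real.cos θ = -(Real.sqrt (1 + 2 / r ^ 2)) / 2) := by
  have hu := sq_mul_sq_sqrt_one_add_two_div_sq_sub_one hr.ne'
  refine ⟨fun θ hθ => ⟨?_, ?_⟩, fun hr2 => ?_⟩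
  · rw [mul_assoc, sin_three_mul_half_mul_cos_half, hθ]
    ring
  · rw [mul_assoc, sin_three_mul_half_mul_sin_half, hθ]
    linear_combination (-1 / 2 : ℝ) * hu
  · rw [← Set.mem_range, range_cos]
    have := sqrt_one_add_two_div_sq_le_two hr2
    constructor <;> linarith [sqrt_nonneg (1 + 2 / r ^ 2)]
end

section
/- Let R_θ : ℝ² → ℝ² denote rotation by angle θ, R_θ(x,y) = (x·cosθ − y·sinθ, x·sinθ + y·cosθ). For every θ, t ∈ ℝ, the map Ψ : ℝ × (0,∞) → ℝ⁴ whose base part is P(x,w) = R_θ(x, t − w − 1/2) and whose fiber part is Ξ(x,w) = R_θ(0, −1/w) is injective and is an exact Lagrangian parametrization with primitive f(x,w) = log w; explicitly, ⟨Ξ(x,w), ∂ₓP(x,w)⟩ = 0 and ⟨Ξ(x,w), ∂_wP(x,w)⟩ = 1/w for all (x,w) ∈ ℝ × (0,∞). -/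
/-- Rotation of the plane `ℝ²` by angle `θ`. -/
noncomputable def rot (θ : ℝ) (p : ℝ × ℝ) : ℝ × ℝ :=
  (p.1 * Real.cos θ - p.2 * Real.sin θ, p.1 * Real.sin θ + p.2 * Real.cos θ)

/-- Euclidean inner product on `ℝ × ℝ`. -/
def dotR2 (a b : ℝ × ℝ) : ℝ := a.1 * b.1 + a.2 * b.2

/-! Since `rot θ` is an injective linear isometry, everything reduces to the unrotated sheet
`(x, w) ↦ ((x, t - w - 1/2), (0, -1/w))`: its base part alone is already injective, and its base
velocities `(1, 0)` and `(0, -1)` pair with the fiber `(0, -1/w)` to `0` and `1/w`. -/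

open Real

theorem rot_zero (p : ℝ × ℝ) : rot 0 p = p := by
  simp [rot]

theorem rot_rot (θ φ : ℝ) (p : ℝ × ℝ) : rot θ (rot φ p) = rot (θ + φ) p := by
  simp only [rot, cos_add, sin_add, Prod.mk.injEq]
  constructor <;> ring

theorem rot_injective (θ : ℝ) : Function.Injective (rot θ) :=
  Function.LeftInverse.injective (g := rot (-θ)) fun p => by
    rw [rot_rot, neg_add_cancel, rot_zero]

theorem dotR2_rot_rot (θ : ℝ) (a b : ℝ × ℝ) : dotR2 (rot θ a) (rot θ b) = dotR2 a b := by
  simp only [dotR2, rot]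
  linear_combination (a.1 * b.1 + a.2 * b.2) * sin_sq_add_cos_sq θ

theorem HasDerivAt.rot {γ : ℝ → ℝ × ℝ} {γ' : ℝ × ℝ} {s : ℝ} (θ : ℝ)
    (h : HasDerivAt γ γ' s) : HasDerivAt (fun s => rot θ (γ s)) (rot θ γ') s := by
  have h₁ : HasDerivAt (fun s => (γ s).1) γ'.1 s :=
    (hasFDerivAt_fst (p := γ s)).comp_hasDerivAt s h
  have h₂ : HasDerivAt (fun s => (γ s).2) γ'.2 s :=
    (hasFDerivAt_snd (p := γ s)).comp_hasDerivAt s h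
  exact ((h₁.mul_const _).sub (h₂.mul_const _)).prodMk ((h₁.mul_const _).add (h₂.mul_const _))

theorem deriv_rot_horizontal (θ c x : ℝ) :
    deriv (fun x' : ℝ => rot θ (x', c)) x = rot θ (1, 0) :=
  (((hasDerivAt_id x).prodMk (hasDerivAt_const x c)).rot θ).deriv

theorem deriv_rot_vertical (θ x c w : ℝ) :
    deriv (fun w' : ℝ => rot θ (x, c - w' - 1 / 2)) w = rot θ (0, -1) := by
  have hv : HasDerivAt (fun w' : ℝ => (x, c - w' - 1 / 2)) (0, -1) w := by
    simpa using (hasDerivAt_const w x).prodMk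
      (((hasDerivAt_const w c).sub (hasDerivAt_id w)).sub_const (1 / 2 : ℝ))
  exact (hv.rot θ).deriv

/-- Each rotated sheet of the hybrid Lagrangian in Reidemeister III move 2:
the map with base part `P(x,w) = R_θ(x, t − w − 1/2)` and fiber part
`Ξ(x,w) = R_θ(0, −1/w)` is injective on `ℝ × (0,∞)` and is an exact Lagrangian
parametrization with primitive `f(x,w) = log w`. -/
theorem stmt_7 (θ t : ℝ) :
    Set.InjOn (fun p : ℝ × ℝ =>
        (rot θ (p.1, t - p.2 - 1 / 2), rot θ (0, -1 / p.2)))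
      (Set.univ ×ˢ Set.Ioi (0 : ℝ)) ∧
    ∀ x w : ℝ, 0 < w →
      dotR2 (rot θ (0, -1 / w)) (deriv (fun x' : ℝ => rot θ (x', t - w - 1 / 2)) x) = 0 ∧
      dotR2 (rot θ (0, -1 / w)) (deriv (fun w' : ℝ => rot θ (x, t - w' - 1 / 2)) w) = 1 / w ∧
      deriv (fun w' : ℝ => Real.log w') w = 1 / w := by
  refine ⟨Function.Injective.injOn fun p q hpq => ?_, fun x w _ => ⟨?_, ?_, ?_⟩⟩
  · have hbase := Prod.mk.inj (rot_injective θ (Prod.mk.inj hpq).1)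
    exact Prod.ext hbase.1 (by linarith [hbase.2])
  · rw [deriv_rot_horizontal, dotR2_rot_rot, dotR2]
    ring
  · rw [deriv_rot_vertical, dotR2_rot_rot, dotR2]
    ring
  · rw [deriv_log, one_div]
end
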